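/- Let A be a finite dimensional hereditary algebra. If T' → T is an arrow in the tilting quiver K(A) given by an exchange sequence 0 → X → E → Y → 0 with E ∈ add M (where T' = M ⊕ X, T = M ⊕ Y), and N is a projective-injective module over some algebra containing A-mod (specifically P̄ over A^{(1)}), then X → E remains a minimal left add(M ⊕ N)-approximation and E → Y remains a minimal right add(M ⊕ N)-approximation. -/

import Mathlib

open CategoryTheory

/-! Core definitions: short exact sequences, Ext¹-vanishing, projective dimension,
tilting modules, the tilting quiver, etc., over an arbitrary ring `Λ`.
Modules are objects of `ModuleCat.{0} Λ`. -/

universe u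

section Core

variable (Λ : Type) [Ring Λ]

/-- `0 → X → E → Y → 0` is short exact (via the maps `f`, `g`). -/
def IsSES {X E Y : ModuleCat.{0} Λ} (f : X →ₗ[Λ] E) (g : E →ₗ[Λ] Y) : Prop :=
  Function.Injective f ∧ Function.Surjective g ∧ LinearMap.range f = LinearMap.ker g

/-- `Ext¹_Λ(X, Y) = 0`, expressed by the splitting of every extension of `X` by `Y`. -/
def Ext1Zero (X Y : ModuleCat.{0} Λ) : Prop :=
  ∀ (E : ModuleCat.{0} Λ) (f : Y →ₗ[Λ] E) (g : E →ₗ[Λ] X),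
    IsSES Λ f g → ∃ s : X →ₗ[Λ] E, g ∘ₗ s = LinearMap.id

/-- Projective dimension at most `n`. -/
def pdLE : ℕ → ModuleCat.{0} Λ → Prop
  | 0, M => Module.Projective Λ M
  | n + 1, M => Module.Projective Λ M ∨
      ∃ P : ModuleCat.{0} Λ, Module.Projective Λ P ∧
        ∃ g : P →ₗ[Λ] M, Function.Surjective g ∧
          pdLE n (ModuleCat.of Λ (LinearMap.ker g))

/-- Global dimension at most `n`. -/
def gldimLE (n : ℕ) : Prop := ∀ M : ModuleCat.{0} Λ, pdLE Λ n M

/-- Isomorphism of modules. -/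
def IsoM (M N : ModuleCat.{0} Λ) : Prop := Nonempty (M ≃ₗ[Λ] N)

/-- `X` belongs to `add M`: it is a direct summand of a finite direct power of `M`. -/
def InAdd (M X : ModuleCat.{0} Λ) : Prop :=
  ∃ (m : ℕ) (s : X →ₗ[Λ] (Fin m → M)) (r : (Fin m → M) →ₗ[Λ] X),
    r ∘ₗ s = LinearMap.id

/-- An indecomposable module: nonzero, with no nontrivial idempotent endomorphism. -/
def Indec (M : ModuleCat.{0} Λ) : Prop :=
  Nontrivial M ∧ ∀ e : M →ₗ[Λ] M, e ∘ₗ e = e → e = 0 ∨ e = LinearMap.id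

/-- `δ(M) = n` : `M` decomposes as a direct sum of `n` pairwise non-isomorphic
indecomposable modules (in particular `M` is basic). -/
def DeltaEq (M : ModuleCat.{0} Λ) (n : ℕ) : Prop :=
  ∃ f : Fin n → ModuleCat.{0} Λ, (∀ i, Indec Λ (f i)) ∧
    (∀ i j, i ≠ j → ¬ IsoM Λ (f i) (f j)) ∧
    IsoM Λ M (ModuleCat.of Λ (∀ i, f i))

/-- A basic module: direct sum of pairwise non-isomorphic indecomposables. -/
def IsBasic (M : ModuleCat.{0} Λ) : Prop := ∃ n, DeltaEq Λ M n

/-- The regular module `Λ`. -/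
abbrev regMod : ModuleCat.{0} Λ := ModuleCat.of Λ Λ

/-- A tilting module: `pd T ≤ 1`, `Ext¹(T,T) = 0`, and there is an exact sequence
`0 → Λ → T₀ → T₁ → 0` with `T₀, T₁ ∈ add T`. -/
def IsTilting (T : ModuleCat.{0} Λ) : Prop :=
  pdLE Λ 1 T ∧ Ext1Zero Λ T T ∧
    ∃ T₀ T₁ : ModuleCat.{0} Λ, InAdd Λ T T₀ ∧ InAdd Λ T T₁ ∧
      ∃ (f : regMod Λ →ₗ[Λ] T₀) (g : T₀ →ₗ[Λ] T₁), IsSES Λ f g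

/-- Direct sum of two modules. -/
abbrev dsum (M N : ModuleCat.{0} Λ) : ModuleCat.{0} Λ := ModuleCat.of Λ (M × N)

/-- There is an arrow `T' → T` in the tilting quiver `𝒦(Λ)`: both are basic tilting
modules, `T' = M ⊕ X`, `T = M ⊕ Y` with `X`, `Y` indecomposable and non-isomorphic, and
there is a short exact sequence `0 → X → E → Y → 0` with `E ∈ add M`. -/
def TiltArrow (T' T : ModuleCat.{0} Λ) : Prop :=
  IsBasic Λ T' ∧ IsTilting Λ T' ∧ IsBasic Λ T ∧ IsTilting Λ T ∧
    ∃ M X Y : ModuleCat.{0} Λ, Indec Λ X ∧ Indec Λ Y ∧ ¬ IsoM Λ X Y ∧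
      IsoM Λ T' (dsum Λ M X) ∧ IsoM Λ T (dsum Λ M Y) ∧
      ∃ E : ModuleCat.{0} Λ, InAdd Λ M E ∧
        ∃ (f : X →ₗ[Λ] E) (g : E →ₗ[Λ] Y), IsSES Λ f g

/-- The vertex `T` of the tilting quiver has exactly `n` incident arrows
(counted up to isomorphism of the other endpoint, arrows in and out together). -/
def IncidentCount (n : ℕ) (T : ModuleCat.{0} Λ) : Prop :=
  ∃ f : Fin n → ModuleCat.{0} Λ,
    (∀ i, TiltArrow Λ (f i) T ∨ TiltArrow Λ T (f i)) ∧
    (∀ i j, i ≠ j → ¬ IsoM Λ (f i) (f j)) ∧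
    ∀ T'', (TiltArrow Λ T'' T ∨ TiltArrow Λ T T'') → ∃ i, IsoM Λ T'' (f i)

/-- `M` is generated by `T`. -/
def GenBy (T M : ModuleCat.{0} Λ) : Prop :=
  ∃ (m : ℕ) (g : (Fin m → T) →ₗ[Λ] M), Function.Surjective g

/-- There are exactly `s` basic tilting modules up to isomorphism. -/
def TiltingCountEq (s : ℕ) : Prop :=
  ∃ f : Fin s → ModuleCat.{0} Λ,
    (∀ i, IsBasic Λ (f i) ∧ IsTilting Λ (f i)) ∧
    (∀ i j, i ≠ j → ¬ IsoM Λ (f i) (f j)) ∧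
    ∀ T, IsBasic Λ T → IsTilting Λ T → ∃ i, IsoM Λ T (f i)

/-- The tilting quiver has exactly `t` arrows (up to isomorphism of endpoint pairs). -/
def ArrowCountEq (t : ℕ) : Prop :=
  ∃ g : Fin t → ModuleCat.{0} Λ × ModuleCat.{0} Λ,
    (∀ p, TiltArrow Λ (g p).1 (g p).2) ∧
    (∀ p q, p ≠ q → ¬ (IsoM Λ (g p).1 (g q).1 ∧ IsoM Λ (g p).2 (g q).2)) ∧
    ∀ T' T, TiltArrow Λ T' T → ∃ p, IsoM Λ T' (g p).1 ∧ IsoM Λ T (g p).2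

/-- `Λ` is representation-finite: finitely many finitely generated indecomposables
up to isomorphism. -/
def RepFinite : Prop :=
  ∃ (n : ℕ) (f : Fin n → ModuleCat.{0} Λ),
    ∀ M : ModuleCat.{0} Λ, Module.Finite Λ M → Indec Λ M → ∃ i, IsoM Λ M (f i)

/-- A maximal basic projective-injective module (direct sum of all the pairwise
non-isomorphic indecomposable projective-injective modules). -/
def IsProjInjSum (P : ModuleCat.{0} Λ) : Prop :=
  IsBasic Λ P ∧ Module.Projective Λ P ∧ Module.Injective Λ P ∧
    ∀ X : ModuleCat.{0} Λ, Indec Λ X → Module.Projective Λ X → Module.Injective Λ X →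
      InAdd Λ P X

/-- `f : X → E` is left almost split. -/
def IsLeftAlmostSplit {X E : ModuleCat.{0} Λ} (f : X →ₗ[Λ] E) : Prop :=
  (¬ ∃ r : E →ₗ[Λ] X, r ∘ₗ f = LinearMap.id) ∧
  ∀ (U : ModuleCat.{0} Λ) (u : X →ₗ[Λ] U), (¬ ∃ r : U →ₗ[Λ] X, r ∘ₗ u = LinearMap.id) →
    ∃ v : E →ₗ[Λ] U, v ∘ₗ f = u

/-- `g : E → Y` is right almost split. -/
def IsRightAlmostSplit {E Y : ModuleCat.{0} Λ} (g : E →ₗ[Λ] Y) : Prop :=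
  (¬ ∃ s : Y →ₗ[Λ] E, g ∘ₗ s = LinearMap.id) ∧
  ∀ (U : ModuleCat.{0} Λ) (u : U →ₗ[Λ] Y), (¬ ∃ s : Y →ₗ[Λ] U, u ∘ₗ s = LinearMap.id) →
    ∃ v : U →ₗ[Λ] E, g ∘ₗ v = u

/-- `0 → X → E → Y → 0` is an almost split (Auslander–Reiten) sequence. -/
def IsAlmostSplitSeq {X E Y : ModuleCat.{0} Λ} (f : X →ₗ[Λ] E) (g : E →ₗ[Λ] Y) : Prop :=
  IsSES Λ f g ∧ IsLeftAlmostSplit Λ f ∧ IsRightAlmostSplit Λ g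

/-- `N ≅ τ⁻¹ X`: there is an almost split sequence `0 → X → E → N → 0`. -/
def IsTauInv (X N : ModuleCat.{0} Λ) : Prop :=
  ∃ (E : ModuleCat.{0} Λ) (f : X →ₗ[Λ] E) (g : E →ₗ[Λ] N), IsAlmostSplitSeq Λ f g

/-- `f : X → E` is a minimal left `add M`-approximation. -/
def IsMinLeftApprox (M : ModuleCat.{0} Λ) {X E : ModuleCat.{0} Λ} (f : X →ₗ[Λ] E) : Prop :=
  InAdd Λ M E ∧
  (∀ (C : ModuleCat.{0} Λ), InAdd Λ M C → ∀ u : X →ₗ[Λ] C, ∃ v : E →ₗ[Λ] C, v ∘ₗ f = u) ∧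
  ∀ h : E →ₗ[Λ] E, h ∘ₗ f = f → Function.Bijective h

/-- `g : E → Y` is a minimal right `add M`-approximation. -/
def IsMinRightApprox (M : ModuleCat.{0} Λ) {E Y : ModuleCat.{0} Λ} (g : E →ₗ[Λ] Y) : Prop :=
  InAdd Λ M E ∧
  (∀ (C : ModuleCat.{0} Λ), InAdd Λ M C → ∀ u : C →ₗ[Λ] Y, ∃ v : C →ₗ[Λ] E, g ∘ₗ v = u) ∧
  ∀ h : E →ₗ[Λ] E, g ∘ₗ h = g → Function.Bijective h

end Core
/-! The duplicated algebra `A⁽¹⁾ = [[A,0],[DA,A]]`, realized as the trivial square-zero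
extension of `A × A` by the `(A × A)`-bimodule `D(A) = Hom_k(A,k)`, where the left action
is through the second factor and the right action through the first factor:
`[[a,0],[d,b]] · [[a',0],[d',b']] = [[aa',0],[d·a' + b·d', bb']]`. -/

section Dup

variable (k A : Type) [Field k] [Ring A] [Algebra k A]

noncomputable instance dualLeftModule : Module (A × A) (Module.Dual k A) where
  smul p f := f ∘ₗ LinearMap.mulRight k p.2
  one_smul f := by ext x; simp [HSMul.hSMul, SMul.smul]
  mul_smul p q f := by ext x; simp [HSMul.hSMul, SMul.smul, mul_assoc]
  smul_zero p := by ext x; simp [HSMul.hSMul, SMul.smul]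
  smul_add p f g := by ext x; simp [HSMul.hSMul, SMul.smul]
  add_smul p q f := by ext x; simp [HSMul.hSMul, SMul.smul, mul_add]
  zero_smul f := by ext x; simp [HSMul.hSMul, SMul.smul]

noncomputable instance dualRightModule : Module (A × A)ᵐᵒᵖ (Module.Dual k A) where
  smul p f := f ∘ₗ LinearMap.mulLeft k p.unop.1
  one_smul f := by ext x; simp [HSMul.hSMul, SMul.smul]
  mul_smul p q f := by ext x; simp [HSMul.hSMul, SMul.smul, mul_assoc]
  smul_zero p := by ext x; simp [HSMul.hSMul, SMul.smul]
  smul_add p f g := by ext x; simp [HSMul.hSMul, SMul.smul]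
  add_smul p q f := by ext x; simp [HSMul.hSMul, SMul.smul, add_mul]
  zero_smul f := by ext x; simp [HSMul.hSMul, SMul.smul]

instance dualSMulComm : SMulCommClass (A × A) (A × A)ᵐᵒᵖ (Module.Dual k A) where
  smul_comm p q f := by
    ext x
    show f (q.unop.1 * (x * p.2)) = f ((q.unop.1 * x) * p.2)
    rw [mul_assoc]

/-- The duplicated algebra `A⁽¹⁾`. -/
noncomputable abbrev DupAlg : Type := TrivSqZeroExt (A × A) (Module.Dual k A)

noncomputable instance : Ring (DupAlg k A) := inferInstanceAs (Ring (TrivSqZeroExt _ _))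

/-- The projection `A⁽¹⁾ → A` onto the first diagonal entry; restriction of scalars
along it is the canonical embedding of `A`-mod into `A⁽¹⁾`-mod. -/
noncomputable def dupProj : DupAlg k A →+* A where
  toFun x := x.fst.1
  map_one' := rfl
  map_mul' x y := by simp [TrivSqZeroExt.fst_mul]
  map_zero' := rfl
  map_add' x y := by simp [TrivSqZeroExt.fst_add]

/-- An `A`-module viewed as an `A⁽¹⁾`-module. -/
noncomputable abbrev resDup (M : ModuleCat.{0} A) : ModuleCat.{0} (DupAlg k A) :=
  (ModuleCat.restrictScalars (dupProj k A)).obj M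

end Dup

/-! A map into an object of `add C` is a map into a finite power of `C` followed by a
retraction, so a factorization property of `f : X → E` (resp. lifting property of
`g : E → Y`) passes from `C` to all of `add C`, and from `M` and `N` to `M ⊕ N`. For `N`
injective every map `X → N` extends along the monomorphism `f`, and dually for `N`
projective every map `N → Y` lifts along the epimorphism `g`; minimality does not mention
the approximating class. Restriction of scalars along the surjection `A⁽¹⁾ → A` is fully
faithful, so it preserves minimal approximations. -/

namespace InAdd

variable {Λ : Type} [Ring Λ]

theorem refl (M : ModuleCat.{0} Λ) : InAdd Λ M M :=
  ⟨1, LinearMap.pi fun _ => LinearMap.id, LinearMap.proj 0, rfl⟩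

theorem dsum_left {M X : ModuleCat.{0} Λ} (N : ModuleCat.{0} Λ) (h : InAdd Λ M X) :
    InAdd Λ (dsum Λ M N) X := by
  obtain ⟨m, s, r, hrs⟩ := h
  refine ⟨m, LinearMap.compLeft (LinearMap.inl Λ M N) (Fin m) ∘ₗ s,
    r ∘ₗ LinearMap.compLeft (LinearMap.fst Λ M N) (Fin m), ?_⟩
  rw [← hrs]
  rfl

theorem restrictScalars {S : Type} [Ring S] (φ : S →+* Λ) {M X : ModuleCat.{0} Λ}
    (h : InAdd Λ M X) :
    InAdd S ((ModuleCat.restrictScalars φ).obj M) ((ModuleCat.restrictScalars φ).obj X) := by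
  obtain ⟨m, s, r, hrs⟩ := h
  exact ⟨m, ⟨⟨fun x => s x, map_add s⟩, fun c => map_smul s (φ c)⟩,
    ⟨⟨fun v => r v, map_add r⟩, fun c => map_smul r (φ c)⟩,
    LinearMap.ext fun x => LinearMap.congr_fun hrs x⟩

end InAdd

section Approximation

variable {Λ : Type} [Ring Λ] {X E Y C C' D : Type}
  [AddCommGroup X] [Module Λ X] [AddCommGroup E] [Module Λ E] [AddCommGroup Y] [Module Λ Y]
  [AddCommGroup C] [Module Λ C] [AddCommGroup C'] [Module Λ C'] [AddCommGroup D] [Module Λ D]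

def ExtendsAlong (f : X →ₗ[Λ] E) (C : Type) [AddCommGroup C] [Module Λ C] : Prop :=
  ∀ u : X →ₗ[Λ] C, ∃ v : E →ₗ[Λ] C, v ∘ₗ f = u

def LiftsAlong (g : E →ₗ[Λ] Y) (C : Type) [AddCommGroup C] [Module Λ C] : Prop :=
  ∀ u : C →ₗ[Λ] Y, ∃ v : C →ₗ[Λ] E, g ∘ₗ v = u

theorem extendsAlong_of_injective [Module.Injective Λ C] {f : X →ₗ[Λ] E}
    (hf : Function.Injective f) : ExtendsAlong f C := fun u => by
  obtain ⟨v, hv⟩ := Module.Injective.out f hf u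
  exact ⟨v, LinearMap.ext hv⟩

theorem liftsAlong_of_surjective [Module.Projective Λ C] {g : E →ₗ[Λ] Y}
    (hg : Function.Surjective g) : LiftsAlong g C := fun u =>
  Module.projective_lifting_property g u hg

namespace ExtendsAlong

variable {f : X →ₗ[Λ] E}

theorem prod (h₁ : ExtendsAlong f C) (h₂ : ExtendsAlong f D) : ExtendsAlong f (C × D) := by
  intro u
  obtain ⟨v₁, hv₁⟩ := h₁ (LinearMap.fst Λ C D ∘ₗ u)
  obtain ⟨v₂, hv₂⟩ := h₂ (LinearMap.snd Λ C D ∘ₗ u)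
  refine ⟨v₁.prod v₂, ?_⟩
  rw [LinearMap.prod_comp, hv₁, hv₂]
  rfl

theorem pi {ι : Type} (h : ExtendsAlong f C) : ExtendsAlong f (ι → C) := by
  intro u
  choose v hv using fun i => h (LinearMap.proj i ∘ₗ u)
  exact ⟨LinearMap.pi v, by rw [LinearMap.pi_comp, funext hv]; rfl⟩

theorem of_retract (s : C →ₗ[Λ] C') (r : C' →ₗ[Λ] C) (hrs : r ∘ₗ s = LinearMap.id)
    (h : ExtendsAlong f C') : ExtendsAlong f C := by
  intro u
  obtain ⟨v, hv⟩ := h (s ∘ₗ u)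
  refine ⟨r ∘ₗ v, ?_⟩
  rw [LinearMap.comp_assoc, hv, ← LinearMap.comp_assoc, hrs, LinearMap.id_comp]

theorem of_inAdd {M N : ModuleCat.{0} Λ} (hN : InAdd Λ M N) (h : ExtendsAlong f M) :
    ExtendsAlong f N := by
  obtain ⟨m, s, r, hrs⟩ := hN
  exact h.pi.of_retract s r hrs

end ExtendsAlong

namespace LiftsAlong

variable {g : E →ₗ[Λ] Y}

theorem prod (h₁ : LiftsAlong g C) (h₂ : LiftsAlong g D) : LiftsAlong g (C × D) := by
  intro u
  obtain ⟨v₁, hv₁⟩ := h₁ (u ∘ₗ LinearMap.inl Λ C D)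
  obtain ⟨v₂, hv₂⟩ := h₂ (u ∘ₗ LinearMap.inr Λ C D)
  exact ⟨v₁.coprod v₂, by rw [LinearMap.comp_coprod, hv₁, hv₂, LinearMap.coprod_comp_inl_inr]⟩

theorem pi {ι : Type} [Fintype ι] [DecidableEq ι] (h : LiftsAlong g C) :
    LiftsAlong g (ι → C) := by
  intro u
  choose v hv using fun i => h (u ∘ₗ LinearMap.single Λ (fun _ => C) i)
  refine ⟨LinearMap.lsum Λ (fun _ => C) ℕ v, LinearMap.pi_ext fun i x => ?_⟩
  rw [LinearMap.comp_apply, LinearMap.lsum_piSingle, ← LinearMap.comp_apply, hv i]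
  rfl

theorem of_retract (s : C →ₗ[Λ] C') (r : C' →ₗ[Λ] C) (hrs : r ∘ₗ s = LinearMap.id)
    (h : LiftsAlong g C') : LiftsAlong g C := by
  intro u
  obtain ⟨v, hv⟩ := h (u ∘ₗ r)
  refine ⟨v ∘ₗ s, ?_⟩
  rw [← LinearMap.comp_assoc, hv, LinearMap.comp_assoc, hrs, LinearMap.comp_id]

theorem of_inAdd {M N : ModuleCat.{0} Λ} (hN : InAdd Λ M N) (h : LiftsAlong g M) :
    LiftsAlong g N := by
  obtain ⟨m, s, r, hrs⟩ := hN
  exact h.pi.of_retract s r hrs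

end LiftsAlong

end Approximation

section MinimalApproximation

variable {Λ : Type} [Ring Λ] {M N X E Y : ModuleCat.{0} Λ}

theorem IsMinLeftApprox.dsum_of_injective [Module.Injective Λ N] {f : X →ₗ[Λ] E}
    (hf : IsMinLeftApprox Λ M f) (hinj : Function.Injective f) :
    IsMinLeftApprox Λ (dsum Λ M N) f :=
  ⟨hf.1.dsum_left N,
    fun _ hC =>
      (ExtendsAlong.prod (hf.2.1 M (.refl M)) (extendsAlong_of_injective hinj)).of_inAdd hC,
    hf.2.2⟩

theorem IsMinRightApprox.dsum_of_surjective [Module.Projective Λ N] {g : E →ₗ[Λ] Y}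
    (hg : IsMinRightApprox Λ M g) (hsurj : Function.Surjective g) :
    IsMinRightApprox Λ (dsum Λ M N) g :=
  ⟨hg.1.dsum_left N,
    fun _ hC =>
      (LiftsAlong.prod (hg.2.1 M (.refl M)) (liftsAlong_of_surjective hsurj)).of_inAdd hC,
    hg.2.2⟩

end MinimalApproximation

section RestrictScalars

variable {S R : Type} [Ring S] [Ring R] {φ : S →+* R} {M X E Y : ModuleCat.{0} R}

noncomputable def LinearMap.ofRestrictScalars (hφ : Function.Surjective φ)
    (l : (ModuleCat.restrictScalars φ).obj X →ₗ[S] (ModuleCat.restrictScalars φ).obj Y) :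
    X →ₗ[R] Y where
  toFun := l
  map_add' := l.map_add
  map_smul' a x := by
    obtain ⟨c, rfl⟩ := hφ a
    exact l.map_smul c x

theorem IsMinLeftApprox.restrictScalars (hφ : Function.Surjective φ) {f : X →ₗ[R] E}
    (hf : IsMinLeftApprox R M f) :
    IsMinLeftApprox S ((ModuleCat.restrictScalars φ).obj M)
      ((ModuleCat.restrictScalars φ).map (ModuleCat.ofHom f)).hom := by
  refine ⟨hf.1.restrictScalars φ, fun C hC => ExtendsAlong.of_inAdd hC fun u => ?_,
    fun h hh => hf.2.2 (.ofRestrictScalars hφ h) (LinearMap.ext (LinearMap.congr_fun hh ·))⟩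
  obtain ⟨v, hv⟩ := hf.2.1 M (.refl M) (.ofRestrictScalars hφ u)
  exact ⟨((ModuleCat.restrictScalars φ).map (ModuleCat.ofHom v)).hom,
    LinearMap.ext (LinearMap.congr_fun hv ·)⟩

theorem IsMinRightApprox.restrictScalars (hφ : Function.Surjective φ) {g : E →ₗ[R] Y}
    (hg : IsMinRightApprox R M g) :
    IsMinRightApprox S ((ModuleCat.restrictScalars φ).obj M)
      ((ModuleCat.restrictScalars φ).map (ModuleCat.ofHom g)).hom := by
  refine ⟨hg.1.restrictScalars φ, fun C hC => LiftsAlong.of_inAdd hC fun u => ?_,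
    fun h hh => hg.2.2 (.ofRestrictScalars hφ h) (LinearMap.ext (LinearMap.congr_fun hh ·))⟩
  obtain ⟨v, hv⟩ := hg.2.1 M (.refl M) (.ofRestrictScalars hφ u)
  exact ⟨((ModuleCat.restrictScalars φ).map (ModuleCat.ofHom v)).hom,
    LinearMap.ext (LinearMap.congr_fun hv ·)⟩

end RestrictScalars

theorem dupProj_surjective (k A : Type) [Field k] [Ring A] [Algebra k A] :
    Function.Surjective (dupProj k A) :=
  fun a => ⟨TrivSqZeroExt.inl (a, 0), rfl⟩

theorem approximations_unchanged_by_adding_proj_inj_general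
    (k A : Type) [Field k] [Ring A] [Algebra k A]
    (M X E Y : ModuleCat.{0} A)
    (f : X →ₗ[A] E) (g : E →ₗ[A] Y) (hses : IsSES A f g)
    (hf : IsMinLeftApprox A M f) (hg : IsMinRightApprox A M g)
    (Pbar : ModuleCat.{0} (DupAlg k A)) (hP : IsProjInjSum (DupAlg k A) Pbar) :
    IsMinLeftApprox (DupAlg k A) (dsum (DupAlg k A) (resDup k A M) Pbar)
      (((ModuleCat.restrictScalars (dupProj k A)).map (ModuleCat.ofHom f)).hom :
        resDup k A X →ₗ[DupAlg k A] resDup k A E) ∧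
    IsMinRightApprox (DupAlg k A) (dsum (DupAlg k A) (resDup k A M) Pbar)
      (((ModuleCat.restrictScalars (dupProj k A)).map (ModuleCat.ofHom g)).hom :
        resDup k A E →ₗ[DupAlg k A] resDup k A Y) := by
  obtain ⟨-, hproj, hinj, -⟩ := hP
  obtain ⟨f_inj, g_surj, -⟩ := hses
  have hφ := dupProj_surjective k A
  exact ⟨(hf.restrictScalars hφ).dsum_of_injective f_inj,
    (hg.restrictScalars hφ).dsum_of_surjective g_surj⟩

/-- If `T' = M ⊕ X → T = M ⊕ Y` is an arrow of `𝒦(A)` given by an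
exchange sequence `0 → X → E → Y → 0` with `E ∈ add M`, `f` a minimal left
`add M`-approximation and `g` a minimal right `add M`-approximation, and `P̄` is the
projective-injective module over the duplicated algebra `A⁽¹⁾`, then `f` remains a minimal
left `add(M ⊕ P̄)`-approximation and `g` a minimal right `add(M ⊕ P̄)`-approximation in
`A⁽¹⁾`-mod. -/
theorem approximations_unchanged_by_adding_proj_inj
    (k A : Type) [Field k] [Ring A] [Algebra k A] [FiniteDimensional k A]
    (hhered : gldimLE A 1)
    (M X E Y : ModuleCat.{0} A)
    (hX : Indec A X) (hY : Indec A Y)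
    (hT' : IsTilting A (dsum A M X)) (hT : IsTilting A (dsum A M Y))
    (hE : InAdd A M E)
    (f : X →ₗ[A] E) (g : E →ₗ[A] Y) (hses : IsSES A f g)
    (hf : IsMinLeftApprox A M f) (hg : IsMinRightApprox A M g)
    (Pbar : ModuleCat.{0} (DupAlg k A)) (hP : IsProjInjSum (DupAlg k A) Pbar) :
    IsMinLeftApprox (DupAlg k A) (dsum (DupAlg k A) (resDup k A M) Pbar)
      (((ModuleCat.restrictScalars (dupProj k A)).map (ModuleCat.ofHom f)).hom :
        resDup k A X →ₗ[DupAlg k A] resDup k A E) ∧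
    IsMinRightApprox (DupAlg k A) (dsum (DupAlg k A) (resDup k A M) Pbar)
      (((ModuleCat.restrictScalars (dupProj k A)).map (ModuleCat.ofHom g)).hom :
        resDup k A E →ₗ[DupAlg k A] resDup k A Y) :=
  approximations_unchanged_by_adding_proj_inj_general k A M X E Y f g hses hf hg Pbar hP
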